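/- Let N_1, ..., N_{K-1} be i.i.d. uniform on [-1/2, 1/2), let G ∈ ℤ^{K×(K-1)} be an integer matrix whose row sums vanish (1_K^T G = 0) and such that any K-1 rows form a full-rank (hence unimodular over the relevant lattice) matrix. Define S_k := ((G N)_k) mod 1. Then each S_k is uniform on (-1/2, 1/2], any K-1 of the S_k are mutually independent, and (Σ_{k=1}^K S_k) mod 1 = 0. -/

import Mathlib

open MeasureTheory ProbabilityTheory

/-- Zero-centered modulo: `x mod 1 := x - ⌊x + 1/2⌋`. -/
noncomputable def zmod1 (x : ℝ) : ℝ := x - ⌊x + (1 : ℝ) / 2⌋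

/-!
Reduction mod 1 identifies the cube `[-1/2, 1/2)ⁿ` carrying the uniform law with the torus
`(ℝ/ℤ)ⁿ` carrying its Haar probability measure. An integer matrix of full row rank
induces a continuous surjective homomorphism of tori, which maps Haar measure to Haar measure; so
any `K - 1` of the keys are jointly uniform, i.e. independent and uniform. The keys sum to an
integer because the columns of `G` sum to zero.
-/

open Set Matrix

lemma zmod1_eq_toIcoMod (x : ℝ) : zmod1 x = toIcoMod one_pos (-(1 / 2)) x := by
  rw [toIcoMod, toIcoDiv_eq_floor, zmod1]
  simp

lemma measurable_zmod1 : Measurable zmod1 := by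
  unfold zmod1; fun_prop

lemma zmod1_of_mem {x : ℝ} (hx : x ∈ Ico (-(1 / 2) : ℝ) (1 / 2)) : zmod1 x = x := by
  rwa [zmod1_eq_toIcoMod, toIcoMod_eq_self, show -(1 / 2) + 1 = (1 / 2 : ℝ) by norm_num]

lemma zmod1_add_intCast (x : ℝ) (m : ℤ) : zmod1 (x + m) = zmod1 x := by
  simpa [zmod1_eq_toIcoMod] using toIcoMod_add_zsmul one_pos (-(1 / 2)) x m

lemma zmod1_sum_zmod1 {ι : Type*} (s : Finset ι) (x : ι → ℝ) :
    zmod1 (∑ k ∈ s, zmod1 (x k)) = zmod1 (∑ k ∈ s, x k) := by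
  have h : ∑ k ∈ s, zmod1 (x k) = ∑ k ∈ s, x k + ((-∑ k ∈ s, ⌊x k + 1 / 2⌋ : ℤ) : ℝ) := by
    simp only [zmod1, Finset.sum_sub_distrib]; push_cast; ring
  rw [h, zmod1_add_intCast]

noncomputable abbrev centeredUniform : Measure ℝ := volume.restrict (Ico (-(1 / 2)) (1 / 2))

instance isProbabilityMeasure_centeredUniform : IsProbabilityMeasure centeredUniform := ⟨by norm_num⟩

noncomputable def centeredLift (y : UnitAddCircle) : ℝ := AddCircle.equivIco 1 (-(1 / 2)) y

lemma centeredLift_coe (x : ℝ) : centeredLift x = zmod1 x := by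
  rw [zmod1_eq_toIcoMod]; rfl

lemma measurable_centeredLift : Measurable centeredLift :=
  measurable_subtype_coe.comp (AddCircle.measurableEquivIco 1 (-(1 / 2))).measurable

instance UnitAddCircle.isProbabilityMeasure_volume :
    IsProbabilityMeasure (volume : Measure UnitAddCircle) := ⟨by simp⟩

lemma measurePreserving_coe_centeredUniform :
    MeasurePreserving ((↑) : ℝ → UnitAddCircle) centeredUniform volume := by
  have h := UnitAddCircle.measurePreserving_mk (-(1 / 2))
  rwa [show -(1 / 2) + 1 = (1 / 2 : ℝ) by norm_num, ← Measure.restrict_congr_set Ico_ae_eq_Ioc] at h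

lemma measurePreserving_centeredLift : MeasurePreserving centeredLift volume centeredUniform := by
  refine ⟨measurable_centeredLift, ?_⟩
  rw [← measurePreserving_coe_centeredUniform.map_eq, Measure.map_map measurable_centeredLift
    AddCircle.measurable_mk', Function.comp_def]
  simp_rw [centeredLift_coe]
  conv_rhs => rw [← Measure.map_id (μ := centeredUniform)]
  exact Measure.map_congr (ae_restrict_of_forall_mem measurableSet_Ico fun x hx => zmod1_of_mem hx)

section Torus

variable {m n : Type*} [Fintype n]

def Matrix.torusHom (M : Matrix m n ℤ) : (n → UnitAddCircle) →+ (m → UnitAddCircle) :=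
  AddMonoidHom.mk' (fun x i => ∑ j, M i j • x j) fun x y => by
    ext i; simp [smul_add, Finset.sum_add_distrib]

lemma Matrix.continuous_torusHom (M : Matrix m n ℤ) : Continuous M.torusHom := by
  unfold Matrix.torusHom; simp only [AddMonoidHom.mk'_apply]; fun_prop

lemma Matrix.torusHom_coe (M : Matrix m n ℤ) (x : n → ℝ) :
    M.torusHom (fun j => (x j : UnitAddCircle)) =
      fun i => ((M.map (Int.cast : ℤ → ℝ) *ᵥ x) i : UnitAddCircle) := by
  ext i
  simp [Matrix.torusHom, Matrix.mulVec, dotProduct]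

lemma Matrix.torusHom_surjective (M : Matrix m n ℤ)
    (hM : Function.Surjective (M.map (Int.cast : ℤ → ℝ)).mulVec) :
    Function.Surjective M.torusHom := by
  intro y
  choose y' hy' using fun i => QuotientAddGroup.mk_surjective (y i)
  obtain ⟨x, hx⟩ := hM y'
  exact ⟨fun j => x j, by rw [M.torusHom_coe, hx]; exact funext hy'⟩

lemma Matrix.measurePreserving_torusHom [Fintype m] (M : Matrix m n ℤ)
    (hM : Function.Surjective (M.map (Int.cast : ℤ → ℝ)).mulVec) :
    MeasurePreserving M.torusHom volume volume := by
  refine ⟨M.continuous_torusHom.measurable, ?_⟩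
  have := Measure.isAddHaarMeasure_map volume M.torusHom M.continuous_torusHom
    (M.torusHom_surjective hM) (by simp)
  have := Measure.isProbabilityMeasure_map (μ := (volume : Measure (n → UnitAddCircle)))
    M.continuous_torusHom.aemeasurable
  exact Measure.isAddHaarMeasure_eq_of_isProbabilityMeasure _ _

theorem Matrix.measurePreserving_zmod1_mulVec [Fintype m] (M : Matrix m n ℤ)
    (hM : Function.Surjective (M.map (Int.cast : ℤ → ℝ)).mulVec) :
    MeasurePreserving (fun x i => zmod1 ((M.map (Int.cast : ℤ → ℝ) *ᵥ x) i))
      (Measure.pi fun _ : n => centeredUniform) (Measure.pi fun _ : m => centeredUniform) := by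
  have h : (fun x i => zmod1 ((M.map (Int.cast : ℤ → ℝ) *ᵥ x) i)) =
      (fun y i => centeredLift (y i)) ∘ M.torusHom ∘ fun x j => (x j : UnitAddCircle) := by
    ext x i
    simp [M.torusHom_coe, centeredLift_coe]
  rw [h]
  exact (measurePreserving_pi _ _ fun _ => measurePreserving_centeredLift).comp
    ((M.measurePreserving_torusHom hM).comp
      (measurePreserving_pi _ _ fun _ => measurePreserving_coe_centeredUniform))

end Torus

lemma Matrix.mulVec_surjective_of_isUnit_det_submatrix {R m n : Type*} [CommRing R] [Fintype n]
    [DecidableEq n] (A : Matrix m n R) {r : n → m} (hr : Function.Surjective r)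
    (hA : IsUnit (A.submatrix r id).det) : Function.Surjective A.mulVec := by
  intro y
  obtain ⟨x, hx⟩ := mulVec_surjective_iff_isUnit.2 ((isUnit_iff_isUnit_det _).2 hA) (y ∘ r)
  refine ⟨x, funext fun k => ?_⟩
  obtain ⟨i, rfl⟩ := hr k
  exact congrFun hx i

theorem map_zmod1_mulVec_eq_pi {Ω m n : Type*} [MeasurableSpace Ω] [Fintype m] [Fintype n]
    {μ : Measure Ω} (M : Matrix m n ℤ)
    (hM : Function.Surjective (M.map (Int.cast : ℤ → ℝ)).mulVec)
    {N : n → Ω → ℝ} (hN : ∀ j, Measurable (N j))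
    (hNlaw : μ.map (fun ω j => N j ω) = Measure.pi fun _ => centeredUniform) :
    μ.map (fun ω i => zmod1 ((M.map (Int.cast : ℤ → ℝ) *ᵥ fun j => N j ω) i)) =
      Measure.pi fun _ => centeredUniform := by
  rw [← (M.measurePreserving_zmod1_mulVec hM).map_eq, ← hNlaw,
    Measure.map_map (M.measurePreserving_zmod1_mulVec hM).measurable (measurable_pi_lambda _ hN)]
  rfl

section LawOfVector

variable {Ω ι β : Type*} [MeasurableSpace Ω] [MeasurableSpace β] [Fintype ι] {μ : Measure Ω}
  {X : ι → Ω → β} {ν : Measure β}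

lemma map_eq_of_map_fun_eq_pi [IsProbabilityMeasure ν] (hX : ∀ i, Measurable (X i))
    (h : μ.map (fun ω i => X i ω) = Measure.pi fun _ => ν) (i : ι) : μ.map (X i) = ν := by
  rw [← (measurePreserving_eval (fun _ => ν) i).map_eq, ← h,
    Measure.map_map (measurable_pi_apply i) (measurable_pi_lambda _ hX)]
  rfl

lemma iIndepFun_of_map_fun_eq_pi [IsProbabilityMeasure μ] [IsProbabilityMeasure ν]
    (hX : ∀ i, Measurable (X i)) (h : μ.map (fun ω i => X i ω) = Measure.pi fun _ => ν) :
    iIndepFun X μ := by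
  rw [iIndepFun_iff_map_fun_eq_pi_map fun i => (hX i).aemeasurable, h]
  simp_rw [map_eq_of_map_fun_eq_pi hX h]

end LawOfVector

-- `Fin.succAbove`, for a `Fin K` whose size is not syntactically a successor.
def Fin.skip {K : ℕ} (k0 : Fin K) (i : Fin (K - 1)) : Fin K :=
  if h : (i : ℕ) < k0 then ⟨i, h.trans k0.isLt⟩ else ⟨i + 1, Nat.add_lt_of_lt_sub i.isLt⟩

lemma Fin.skip_ne {K : ℕ} (k0 : Fin K) (i : Fin (K - 1)) : k0.skip i ≠ k0 := by
  unfold Fin.skip; split <;> simp [Fin.ext_iff] <;> omega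

def Fin.skipSubtype {K : ℕ} (k0 : Fin K) (i : Fin (K - 1)) : {k // k ≠ k0} :=
  ⟨k0.skip i, k0.skip_ne i⟩

lemma Fin.skipSubtype_surjective {K : ℕ} (k0 : Fin K) : Function.Surjective k0.skipSubtype := by
  rintro ⟨k, hk⟩
  have hk' : (k : ℕ) ≠ k0 := Fin.val_ne_of_ne hk
  simp only [Fin.skipSubtype, Fin.skip, Subtype.mk.injEq]
  rcases lt_or_gt_of_ne hk' with h | h
  · exact ⟨⟨k, by omega⟩, by simp [h]⟩
  · exact ⟨⟨k - 1, by omega⟩, by rw [dif_neg (by simp; omega)]; ext; simp; omega⟩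

/-- Secret-key generation: with `N_1, …, N_{K-1}` i.i.d. `Unif([-1/2,1/2))` and an integer
matrix `G ∈ ℤ^{K×(K-1)}` whose columns each sum to zero (`1_K^T G = 0`) and such that any
`K-1` rows form a full-rank (unimodular) matrix, the keys `S_k := ((G N)_k) mod 1` are each
uniform on `(-1/2, 1/2]`, any `K-1` of them are mutually independent, and
`(Σ_k S_k) mod 1 = 0`. -/
theorem secret_key_generation {Ω : Type*} [MeasurableSpace Ω]
    (μ : Measure Ω) [IsProbabilityMeasure μ]
    (K : ℕ) (hK : 2 ≤ K)
    (G : Matrix (Fin K) (Fin (K - 1)) ℤ)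
    (hrowsum : ∀ j, ∑ k, G k j = 0)
    (hfull : ∀ k0 : Fin K,
      IsUnit (Matrix.det (Matrix.of fun (i j : Fin (K - 1)) =>
        G (if h : (i : ℕ) < (k0 : ℕ) then ⟨i, by omega⟩ else ⟨(i : ℕ) + 1, by omega⟩) j)))
    (N : Fin (K - 1) → Ω → ℝ) (hNmeas : ∀ j, Measurable (N j))
    (hNindep : iIndepFun N μ)
    (hNunif : ∀ j, μ.map (N j) = volume.restrict (Set.Ico (-(1 / 2) : ℝ) (1 / 2)))
    (S : Fin K → Ω → ℝ)
    (hS : ∀ k ω, S k ω = zmod1 (∑ j, (G k j : ℝ) * N j ω)) :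
    (∀ k, μ.map (S k) = volume.restrict (Set.Ioc (-(1 / 2) : ℝ) (1 / 2))) ∧
    (∀ k0 : Fin K,
      iIndepFun (fun i : {k : Fin K // k ≠ k0} => S i) μ) ∧
    (∀ ω, zmod1 (∑ k, S k ω) = 0) := by
  have hSmeas : ∀ k, Measurable (S k) := fun k => by
    simp_rw [funext (hS k)]; exact measurable_zmod1.comp (by fun_prop)
  have hNlaw : μ.map (fun ω j => N j ω) = Measure.pi fun _ => centeredUniform := by
    rw [(iIndepFun_iff_map_fun_eq_pi_map fun j => (hNmeas j).aemeasurable).1 hNindep]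
    simp_rw [hNunif]
  have hSlaw (k0 : Fin K) :
      μ.map (fun ω (k : {k // k ≠ k0}) => S k ω) = Measure.pi fun _ => centeredUniform := by
    have hdet : IsUnit (((G.submatrix Subtype.val id).map (Int.cast : ℤ → ℝ)).submatrix
        k0.skipSubtype id).det := by
      have h := (hfull k0).map (Int.castRingHom ℝ)
      rwa [RingHom.map_det] at h
    have hM := mulVec_surjective_of_isUnit_det_submatrix _ k0.skipSubtype_surjective hdet
    simp_rw [hS]
    exact map_zmod1_mulVec_eq_pi _ hM hNmeas hNlaw
  refine ⟨fun k => ?_, fun k0 => iIndepFun_of_map_fun_eq_pi (fun k => hSmeas k) (hSlaw k0),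
    fun ω => ?_⟩
  · have := Fin.nontrivial_iff_two_le.2 hK
    obtain ⟨k0, hk⟩ := exists_ne k
    rw [map_eq_of_map_fun_eq_pi (X := fun k : {k // k ≠ k0} => S k) (fun k => hSmeas k) (hSlaw k0)
      ⟨k, hk.symm⟩]
    exact Measure.restrict_congr_set Ico_ae_eq_Ioc
  · simp_rw [hS, zmod1_sum_zmod1, Finset.sum_comm (γ := Fin K), ← Finset.sum_mul, ← Int.cast_sum,
      hrowsum]
    norm_num [zmod1]
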